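/- With x_{αβ} denoting the unique minimal-length element of W taking β to α when it exists: (a) if α ⪯ β ⪯ γ are long roots such that x_{αβ} and x_{βγ} are defined, then x_{αγ} is defined and x_{αγ} = x_{αβ} x_{βγ} with l(x_{αγ}) = l(x_{αβ}) + l(x_{βγ}); (b) for every positive long root α, x_{−α,α} is defined and equals the reflection s_α; (c) for every long root α, x_{α,α̃} is defined and equals x_α, the unique element of X_Ĩ with x_α(α̃) = α. -/

import Mathlib

open scoped RealInnerProductSpace Classical

noncomputable section

variable {V : Type} [NormedAddCommGroup V] [InnerProductSpace ℝ V] [FiniteDimensional ℝ V]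

/-- The orthogonal reflection of `V` in the hyperplane orthogonal to `α`
(the reflection `s_α` when `α` is a root). -/
def sref (α : V) : V ≃ₗᵢ[ℝ] V := Submodule.reflection (Submodule.span ℝ {α})ᗮ

/-- The pairing `⟨β, γ∨⟩ = 2(β|γ)/(γ|γ)` of a vector with the coroot of `γ`. -/
def cpair (β γ : V) : ℝ := 2 * ⟪β, γ⟫ / ⟪γ, γ⟫

/-- An irreducible reduced (crystallographic) root system in the real inner product
space `V`, the inner product being invariant under the Weyl group (automatic, since
reflections are isometries), normalized so that the shortest roots have squared length `1`. -/
structure NRootSystem (V : Type) [NormedAddCommGroup V] [InnerProductSpace ℝ V]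
    [FiniteDimensional ℝ V] where
  Φ : Finset V
  nonempty : Φ.Nonempty
  zero_not_mem : (0 : V) ∉ Φ
  span_eq_top : Submodule.span ℝ (Φ : Set V) = ⊤
  reduced : ∀ α ∈ Φ, ∀ t : ℝ, t • α ∈ Φ → t = 1 ∨ t = -1
  pairing_int : ∀ α ∈ Φ, ∀ β ∈ Φ, ∃ n : ℤ, 2 * ⟪β, α⟫ = n * ⟪α, α⟫
  reflect_mem : ∀ α ∈ Φ, ∀ β ∈ Φ, sref α β ∈ Φ
  irreducible : ∀ S : Finset V, S ⊆ Φ → S.Nonempty → (Φ \ S).Nonempty →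
    ∃ α ∈ S, ∃ β ∈ Φ \ S, ⟪α, β⟫ ≠ 0
  norm_one_le : ∀ α ∈ Φ, 1 ≤ ⟪α, α⟫
  exists_norm_one : ∃ α ∈ Φ, ⟪α, α⟫ = 1

namespace NRootSystem

variable (R : NRootSystem V)

/-- `r`, the maximal squared length of a root. -/
def r : ℝ := R.Φ.sup' R.nonempty fun α => ⟪α, α⟫

/-- long roots -/
def IsLong (α : V) : Prop := α ∈ R.Φ ∧ ⟪α, α⟫ = R.r

/-- short roots -/
def IsShort (α : V) : Prop := α ∈ R.Φ ∧ ⟪α, α⟫ < R.r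

/-- The Weyl group `W`, generated by the reflections in the roots. -/
def Weyl : Subgroup (V ≃ₗᵢ[ℝ] V) := Subgroup.closure (sref '' (R.Φ : Set V))

end NRootSystem

/-- The standard parabolic subgroup `W_I` generated by the reflections in `I ⊆ Δ`. -/
def WeylP (I : Finset V) : Subgroup (V ≃ₗᵢ[ℝ] V) := Subgroup.closure (sref '' (I : Set V))

/-- A base (set of simple roots) `Δ` of the root system, together with the
integral coordinates `coeff γ α` of each root `γ` in the basis `Δ`; every root is a
nonnegative or a nonpositive integral combination of the simple roots. -/
structure Base {V : Type} [NormedAddCommGroup V] [InnerProductSpace ℝ V]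
    [FiniteDimensional ℝ V] (R : NRootSystem V) where
  Δ : Finset V
  subset : Δ ⊆ R.Φ
  indep : LinearIndependent ℝ (fun a : {x : V // x ∈ Δ} => (a : V))
  coeff : V → V → ℤ
  coeff_spec : ∀ γ ∈ R.Φ, γ = ∑ α ∈ Δ, (coeff γ α : ℝ) • α
  coeff_sign : ∀ γ ∈ R.Φ, (∀ α ∈ Δ, 0 ≤ coeff γ α) ∨ (∀ α ∈ Δ, coeff γ α ≤ 0)

namespace Base

variable {R : NRootSystem V} (B : Base R)

/-- positive roots -/
def IsPos (γ : V) : Prop := γ ∈ R.Φ ∧ ∀ α ∈ B.Δ, 0 ≤ B.coeff γ α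

/-- negative roots -/
def IsNeg (γ : V) : Prop := γ ∈ R.Φ ∧ ∀ α ∈ B.Δ, B.coeff γ α ≤ 0

/-- the height of a root -/
def ht (γ : V) : ℤ := ∑ α ∈ B.Δ, B.coeff γ α

/-- the dual height `ht∨ γ = ht (γ∨)`: the height of the coroot `γ∨ = 2γ/(γ|γ)`
with respect to the basis of simple coroots `α∨ = 2α/(α|α)`, `α ∈ Δ`. -/
def htv (γ : V) : ℝ := ∑ α ∈ B.Δ, (B.coeff γ α : ℝ) * ⟪α, α⟫ / ⟪γ, γ⟫

/-- The length of `w`: the minimal length of an expression of `w` as a product of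
simple reflections. -/
def len (w : V ≃ₗᵢ[ℝ] V) : ℕ :=
  sInf {n | ∃ g : Fin n → V, (∀ i, g i ∈ B.Δ) ∧ w = (List.ofFn fun i => sref (g i)).prod}

/-- `w` is the longest element of the subgroup `H`. -/
def IsLongest (H : Subgroup (V ≃ₗᵢ[ℝ] V)) (w : V ≃ₗᵢ[ℝ] V) : Prop :=
  w ∈ H ∧ ∀ u ∈ H, B.len u ≤ B.len w

/-- `X_I = {w ∈ W | w(Φ_I⁺) ⊆ Φ⁺}`, the set of minimal length coset
representatives of `W/W_I`. -/
def XI (I : Finset V) : Set (V ≃ₗᵢ[ℝ] V) :=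
  {w | w ∈ R.Weyl ∧
    ∀ γ, γ ∈ R.Φ → γ ∈ Submodule.span ℝ (I : Set V) → B.IsPos γ → B.IsPos (w γ)}

/-- `h` is the highest root. -/
def IsHighest (h : V) : Prop :=
  h ∈ R.Φ ∧ ∀ γ ∈ R.Φ, ∀ α ∈ B.Δ, B.coeff γ α ≤ B.coeff h α

/-- `Ĩ = {α ∈ Δ | (h|α) = 0}`, the simple roots orthogonal to the highest root `h`. -/
def Itil (h : V) : Finset V := B.Δ.filter fun α => ⟪h, α⟫ = 0

/-- The level `L(α)` of a long root `α`, where `h` is the highest root: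
`L(α) = ht∨(h) − ht∨(α)` if `α > 0` and `L(α) = ht∨(h) − ht∨(α) − 1` if `α < 0`. -/
def level (h α : V) : ℝ :=
  if B.IsPos α then B.htv h - B.htv α else B.htv h - B.htv α - 1

/-- The elementary step relation `β →_γ α` on long roots (`γ` a positive root):
`α = s_γ(β)` and `L(α) = L(β) + 1`. -/
def Step (h γ β α : V) : Prop :=
  R.IsLong β ∧ R.IsLong α ∧ B.IsPos γ ∧ α = sref γ β ∧
    B.level h α = B.level h β + 1

/-- `g` is the sequence of positive roots of a path
`β = β₀ →_{g 0} β₁ →_{g 1} ⋯ →_{g (n-1)} β_n = α` from `β` to `α`. -/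
def IsPathWord (h : V) {n : ℕ} (g : Fin n → V) (β α : V) : Prop :=
  ∃ c : Fin (n + 1) → V, c 0 = β ∧ c (Fin.last n) = α ∧
    ∀ i : Fin n, B.Step h (g i) (c i.castSucc) (c i.succ)

/-- a path all of whose steps use simple roots -/
def IsSimplePathWord (h : V) {n : ℕ} (g : Fin n → V) (β α : V) : Prop :=
  B.IsPathWord h g β α ∧ ∀ i, g i ∈ B.Δ

/-- there is a path from `β` to `α`, i.e. `α ⪯ β` -/
def HasPath (h β α : V) : Prop := ∃ (n : ℕ) (g : Fin n → V), B.IsPathWord h g β α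

/-- there is a simple path from `β` to `α` -/
def HasSimplePath (h β α : V) : Prop :=
  ∃ (n : ℕ) (g : Fin n → V), B.IsSimplePathWord h g β α

/-- The covering relation `w →_γ w'` for the Bruhat order:
`w' = s_γ w` and `l(w') = l(w) + 1`, for a positive root `γ`. -/
def BStep (γ : V) (w w' : V ≃ₗᵢ[ℝ] V) : Prop :=
  B.IsPos γ ∧ w' = sref γ * w ∧ B.len w' = B.len w + 1

/-- The Bruhat order on `W`: the reflexive–transitive closure of the covering
relations. -/
def bruhatLE : (V ≃ₗᵢ[ℝ] V) → (V ≃ₗᵢ[ℝ] V) → Prop :=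
  Relation.ReflTransGen fun w w' => ∃ γ, B.BStep γ w w'

/-- `x` is an element of `W` with `x(β) = α` of the minimal possible length
`|L(α) − L(β)|` (this is the element `x_{αβ}` when it exists). -/
def MinTake (h β α : V) (x : V ≃ₗᵢ[ℝ] V) : Prop :=
  x ∈ R.Weyl ∧ x β = α ∧ (B.len x : ℝ) = |B.level h α - B.level h β|

/-- `g` is a reduced expression of `x` as a product of simple reflections. -/
def IsReducedWord {n : ℕ} (g : Fin n → V) (x : V ≃ₗᵢ[ℝ] V) : Prop :=
  (∀ i, g i ∈ B.Δ) ∧ x = (List.ofFn fun i => sref (g i)).prod ∧ n = B.len x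

/-- The depth of a positive root `β`: the minimal integer `k` such that there is an
element `w` of `W` of length `k` with `w(β) < 0`. -/
def depth (β : V) : ℕ := sInf {n | ∃ w ∈ R.Weyl, B.len w = n ∧ B.IsNeg (w β)}

end Base

/-! The length of `w ∈ W` bounds the change of level it causes, `|L(wδ) − L(δ)| ≤ l(w)`, since a
simple reflection changes the level of a long root by at most one (its coroot pairing with any
other root is `0` or `±1`). Part (a) follows because the lengths add up to the level
difference, which is also a lower bound. For (b), `L(−α) − L(α) = 2 ht∨(α) − 1`, and writing
`s_α = s_a s_{s_a α} s_a` with `(α | a) > 0` gives the matching upper bound by induction on the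
height. For (c), induct on `l(x)`: a reduced word `x = s_a x'` has `x⁻¹ a < 0`, so `x' ∈ X_Ĩ`
and `(a | x α̃) < 0`, whence `s_a` lowers the level of `x α̃` by exactly one. -/

section Reflection

omit [FiniteDimensional ℝ V]

theorem sref_apply (a v : V) : sref a v = v - cpair v a • a := by
  by_cases ha : a = 0
  · subst ha
    have hv : v ∈ (Submodule.span ℝ ({0} : Set V))ᗮ := by simp
    rw [sref, cpair]
    simpa using Submodule.reflection_mem_subspace_eq_self hv
  · have h0 : sref a v = -(Submodule.reflection (Submodule.span ℝ {a}) v) := by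
      simpa [sref] using Submodule.reflection_orthogonal_apply (K := Submodule.span ℝ {a}) v
    rw [h0, Submodule.reflection_apply, Submodule.starProjection_singleton]
    simp only [RCLike.ofReal_real_eq_id, id]
    rw [cpair, real_inner_comm a v, ← real_inner_self_eq_norm_sq a, two_smul]
    module

theorem sref_apply_self (a : V) : sref a a = -a :=
  Submodule.reflection_orthogonalComplement_singleton_eq_neg a

theorem sref_sref_apply (a v : V) : sref a (sref a v) = v :=
  Submodule.reflection_reflection _ v

theorem sref_mul_self (a : V) : sref a * sref a = 1 :=
  LinearIsometryEquiv.ext (sref_sref_apply a)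

theorem sref_inv (a : V) : (sref a)⁻¹ = sref a :=
  inv_eq_of_mul_eq_one_right (sref_mul_self a)

theorem sref_neg (a : V) : sref (-a) = sref a := by
  simp only [sref, ← Set.neg_singleton, Submodule.span_neg]

theorem sref_map (w : V ≃ₗᵢ[ℝ] V) (a : V) : sref (w a) = w * sref a * w⁻¹ := by
  ext v
  change sref (w a) v = w (sref a (w.symm v))
  rw [sref_apply, sref_apply, map_sub, map_smul, w.apply_symm_apply, cpair, cpair,
    ← w.inner_map_map (w.symm v), w.apply_symm_apply, w.inner_map_map]

theorem sref_eq_sref_mul_sref_sref_mul (a β : V) :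
    sref β = sref a * sref (sref a β) * sref a := by
  rw [sref_map, sref_inv, ← mul_assoc, ← mul_assoc, sref_mul_self, one_mul, mul_assoc,
    sref_mul_self, mul_one]

theorem sref_ne_one {a : V} (ha : a ≠ 0) : sref a ≠ 1 := by
  intro h
  have h2 : (2 : ℝ) • a = 0 := by
    have := congrArg (· a) h
    simp only [sref_apply_self, LinearIsometryEquiv.coe_one, id] at this
    rw [two_smul]
    nth_rewrite 1 [← this]
    exact neg_add_cancel a
  exact ha ((smul_eq_zero.mp h2).resolve_left two_ne_zero)

theorem cpair_neg_left (a β : V) : cpair (-a) β = -cpair a β := by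
  simp [cpair, inner_neg_left, neg_div]

end Reflection

namespace NRootSystem

variable (R : NRootSystem V)

theorem inner_self_pos {α : V} (hα : α ∈ R.Φ) : 0 < ⟪α, α⟫ :=
  one_pos.trans_le (R.norm_one_le α hα)

theorem ne_zero_of_mem {α : V} (hα : α ∈ R.Φ) : α ≠ 0 :=
  fun h => R.zero_not_mem (h ▸ hα)

theorem neg_mem {α : V} (hα : α ∈ R.Φ) : -α ∈ R.Φ := by
  simpa [sref_apply_self] using R.reflect_mem α hα α hα

theorem exists_int_cpair_eq {α β : V} (hα : α ∈ R.Φ) (hβ : β ∈ R.Φ) :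
    ∃ n : ℤ, cpair β α = n := by
  obtain ⟨n, hn⟩ := R.pairing_int α hα β hβ
  exact ⟨n, by rw [cpair, hn, mul_div_assoc, div_self (R.inner_self_pos hα).ne', mul_one]⟩

theorem inner_self_le_r {γ : V} (hγ : γ ∈ R.Φ) : ⟪γ, γ⟫ ≤ R.r :=
  Finset.le_sup' (fun α => ⟪α, α⟫) hγ

theorem sref_mem_weyl {α : V} (hα : α ∈ R.Φ) : sref α ∈ R.Weyl :=
  Subgroup.subset_closure ⟨α, hα, rfl⟩

theorem apply_mem_of_mem_weyl {w : V ≃ₗᵢ[ℝ] V} (hw : w ∈ R.Weyl) {γ : V} (hγ : γ ∈ R.Φ) :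
    w γ ∈ R.Φ := by
  induction hw using Subgroup.closure_induction'' generalizing γ with
  | mem _ hs =>
    obtain ⟨α, hα, rfl⟩ := hs
    exact R.reflect_mem α hα γ hγ
  | inv_mem _ hs =>
    obtain ⟨α, hα, rfl⟩ := hs
    rw [sref_inv]
    exact R.reflect_mem α hα γ hγ
  | one => exact hγ
  | mul x y _ _ hx hy => exact hx (hy hγ)

theorem isLong_apply_of_mem_weyl {w : V ≃ₗᵢ[ℝ] V} (hw : w ∈ R.Weyl) {γ : V}
    (hγ : R.IsLong γ) : R.IsLong (w γ) :=
  ⟨R.apply_mem_of_mem_weyl hw hγ.1, by rw [w.inner_map_map]; exact hγ.2⟩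

theorem inner_mul_inner_lt {a α : V} (ha : a ∈ R.Φ) (hα : α ∈ R.Φ) (h₁ : a ≠ α)
    (h₂ : a ≠ -α) : ⟪a, α⟫ * ⟪a, α⟫ < ⟪a, a⟫ * ⟪α, α⟫ := by
  refine (real_inner_mul_inner_self_le a α).lt_of_ne fun heq => ?_
  have hnorm : (0 : ℝ) < ‖a‖ * ‖α‖ :=
    mul_pos (norm_pos_iff.mpr (R.ne_zero_of_mem ha)) (norm_pos_iff.mpr (R.ne_zero_of_mem hα))
  have habs : |⟪a, α⟫| = ‖a‖ * ‖α‖ := by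
    rw [← abs_of_pos hnorm, ← sq_eq_sq_iff_abs_eq_abs, mul_pow,
      ← real_inner_self_eq_norm_sq, ← real_inner_self_eq_norm_sq, sq, heq]
  have hone : |⟪a, α⟫ / (‖a‖ * ‖α‖)| = 1 := by
    rw [abs_div, habs, abs_of_pos hnorm, div_self hnorm.ne']
  obtain ⟨-, t, -, rfl⟩ := (abs_real_inner_div_norm_mul_norm_eq_one_iff a α).mp hone
  rcases R.reduced a ha t hα with rfl | rfl
  · exact h₁ (one_smul ℝ a).symm
  · exact h₂ (by rw [neg_one_smul, neg_neg])

theorem abs_cpair_le_one {α a : V} (hα : R.IsLong α) (ha : a ∈ R.Φ) (h₁ : a ≠ α)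
    (h₂ : a ≠ -α) : |cpair a α| ≤ 1 := by
  obtain ⟨n, hn⟩ := R.exists_int_cpair_eq hα.1 ha
  have haα : ⟪a, a⟫ ≤ ⟪α, α⟫ := hα.2 ▸ R.inner_self_le_r ha
  have hα0 := R.inner_self_pos hα.1
  have hsq : cpair a α ^ 2 < 4 := by
    rw [cpair, div_pow, div_lt_iff₀ (by positivity)]
    nlinarith [R.inner_mul_inner_lt ha hα.1 h₁ h₂, R.inner_self_pos ha]
  rw [hn] at hsq ⊢
  have : n ^ 2 < 4 := by exact_mod_cast hsq
  have : |n| ≤ 1 := abs_le.mpr ⟨by nlinarith, by nlinarith⟩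
  exact_mod_cast this

theorem cpair_eq_one_of_inner_pos {α a : V} (hα : R.IsLong α) (ha : a ∈ R.Φ) (hne : a ≠ α)
    (hip : 0 < ⟪a, α⟫) : cpair a α = 1 := by
  have hne' : a ≠ -α := by
    rintro rfl
    linarith [R.inner_self_pos hα.1, inner_neg_left (𝕜 := ℝ) α α]
  obtain ⟨n, hn⟩ := R.exists_int_cpair_eq hα.1 ha
  have hpos : 0 < cpair a α := div_pos (by linarith) (R.inner_self_pos hα.1)
  have hle := R.abs_cpair_le_one hα ha hne hne'
  rw [hn] at hpos hle ⊢
  have : n = 1 := by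
    have : 0 < n := by exact_mod_cast hpos
    have : |n| ≤ 1 := by exact_mod_cast hle
    rw [abs_le] at this
    omega
  simp [this]

theorem cpair_eq_neg_one_of_inner_neg {α a : V} (hα : R.IsLong α) (ha : a ∈ R.Φ)
    (hne : a ≠ -α) (hip : ⟪a, α⟫ < 0) : cpair a α = -1 := by
  have := R.cpair_eq_one_of_inner_pos hα (R.neg_mem ha) (fun h => hne (neg_eq_iff_eq_neg.mp h))
    (by rw [inner_neg_left]; linarith)
  rw [cpair_neg_left] at this
  linarith

end NRootSystem

namespace Base

variable {R : NRootSystem V} (B : Base R)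

theorem coeff_eq_of_eq_sum {γ : V} (hγ : γ ∈ R.Φ) (f : V → ℤ)
    (hf : γ = ∑ b ∈ B.Δ, (f b : ℝ) • b) {b : V} (hb : b ∈ B.Δ) : B.coeff γ b = f b := by
  have hzero : ∑ i : B.Δ, ((B.coeff γ i : ℝ) - f i) • (i : V) = 0 := by
    rw [Finset.sum_coe_sort B.Δ fun b => ((B.coeff γ b : ℝ) - f b) • b]
    simp only [sub_smul, Finset.sum_sub_distrib, ← B.coeff_spec γ hγ, ← hf, sub_self]
  have := linearIndependent_iff'.mp B.indep Finset.univ _ hzero ⟨b, hb⟩ (Finset.mem_univ _)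
  exact_mod_cast sub_eq_zero.mp this

theorem coeff_neg {γ : V} (hγ : γ ∈ R.Φ) {b : V} (hb : b ∈ B.Δ) :
    B.coeff (-γ) b = -B.coeff γ b := by
  refine B.coeff_eq_of_eq_sum (R.neg_mem hγ) (fun b => -B.coeff γ b) ?_ hb
  conv_lhs => rw [B.coeff_spec γ hγ]
  simp [neg_smul]

theorem coeff_simple {a : V} (ha : a ∈ B.Δ) {b : V} (hb : b ∈ B.Δ) :
    B.coeff a b = if b = a then 1 else 0 := by
  refine B.coeff_eq_of_eq_sum (B.subset ha) (fun b => if b = a then 1 else 0) ?_ hb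
  simp [ite_smul, ha]

theorem coeff_sref_simple {γ a : V} (hγ : γ ∈ R.Φ) (ha : a ∈ B.Δ) {n : ℤ}
    (hn : cpair γ a = n) {b : V} (hb : b ∈ B.Δ) :
    B.coeff (sref a γ) b = B.coeff γ b - if b = a then n else 0 := by
  refine B.coeff_eq_of_eq_sum (R.reflect_mem a (B.subset ha) γ hγ)
    (fun b => B.coeff γ b - if b = a then n else 0) ?_ hb
  rw [sref_apply, hn]
  conv_lhs => rw [B.coeff_spec γ hγ]
  simp [sub_smul, Finset.sum_sub_distrib, ite_smul, ha]

theorem isPos_or_isNeg {γ : V} (hγ : γ ∈ R.Φ) : B.IsPos γ ∨ B.IsNeg γ :=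
  (B.coeff_sign γ hγ).imp (⟨hγ, ·⟩) (⟨hγ, ·⟩)

theorem not_isPos_of_isNeg {γ : V} (hγ : B.IsNeg γ) : ¬B.IsPos γ := by
  intro hpos
  apply R.ne_zero_of_mem hγ.1
  rw [B.coeff_spec γ hγ.1]
  refine Finset.sum_eq_zero fun b hb => ?_
  rw [le_antisymm (hγ.2 b hb) (hpos.2 b hb)]
  simp

theorem isNeg_neg {γ : V} (hγ : B.IsPos γ) : B.IsNeg (-γ) :=
  ⟨R.neg_mem hγ.1, fun b hb => by rw [B.coeff_neg hγ.1 hb]; linarith [hγ.2 b hb]⟩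

theorem isPos_neg {γ : V} (hγ : B.IsNeg γ) : B.IsPos (-γ) :=
  ⟨R.neg_mem hγ.1, fun b hb => by rw [B.coeff_neg hγ.1 hb]; linarith [hγ.2 b hb]⟩

theorem isPos_of_mem_base {a : V} (ha : a ∈ B.Δ) : B.IsPos a :=
  ⟨B.subset ha, fun b hb => by rw [B.coeff_simple ha hb]; split_ifs <;> norm_num⟩

theorem isPos_sref_simple {a γ : V} (ha : a ∈ B.Δ) (hγ : B.IsPos γ) (hne : γ ≠ a) :
    B.IsPos (sref a γ) := by
  obtain ⟨n, hn⟩ := R.exists_int_cpair_eq (B.subset ha) hγ.1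
  refine (B.isPos_or_isNeg (R.reflect_mem a (B.subset ha) γ hγ.1)).resolve_right fun hneg => ?_
  by_cases hsupp : ∃ b ∈ B.Δ, b ≠ a ∧ 0 < B.coeff γ b
  · obtain ⟨b, hb, hba, hcb⟩ := hsupp
    have := hneg.2 b hb
    rw [B.coeff_sref_simple hγ.1 ha hn hb, if_neg hba] at this
    omega
  · push Not at hsupp
    have hγa : γ = (B.coeff γ a : ℝ) • a := by
      conv_lhs => rw [B.coeff_spec γ hγ.1]
      refine Finset.sum_eq_single_of_mem a ha fun b hb hba => ?_
      rw [le_antisymm (hsupp b hb hba) (hγ.2 b hb)]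
      simp
    rcases R.reduced a (B.subset ha) _ (hγa ▸ hγ.1) with h | h
    · exact hne (by rw [hγa, h, one_smul])
    · have : B.coeff γ a = -1 := by exact_mod_cast h
      linarith [hγ.2 a ha]

theorem isNeg_sref_simple {a γ : V} (ha : a ∈ B.Δ) (hγ : B.IsNeg γ) (hne : γ ≠ -a) :
    B.IsNeg (sref a γ) := by
  have := B.isPos_sref_simple ha (B.isPos_neg hγ) fun h => hne (neg_eq_iff_eq_neg.mp h)
  simpa using B.isNeg_neg this

theorem htv_eq_sum_div (γ : V) :
    B.htv γ = (∑ b ∈ B.Δ, (B.coeff γ b : ℝ) * ⟪b, b⟫) / ⟪γ, γ⟫ :=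
  (Finset.sum_div ..).symm

theorem htv_simple {a : V} (ha : a ∈ B.Δ) : B.htv a = 1 := by
  rw [B.htv_eq_sum_div, Finset.sum_congr rfl fun b hb => by rw [B.coeff_simple ha hb]]
  simp [ha, R.ne_zero_of_mem (B.subset ha)]

theorem htv_neg {γ : V} (hγ : γ ∈ R.Φ) : B.htv (-γ) = -B.htv γ := by
  rw [B.htv_eq_sum_div, B.htv_eq_sum_div, inner_neg_neg,
    Finset.sum_congr rfl fun b hb => by rw [B.coeff_neg hγ hb]]
  simp [neg_div]

theorem htv_sref_simple {γ a : V} (hγ : γ ∈ R.Φ) (ha : a ∈ B.Δ) :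
    B.htv (sref a γ) = B.htv γ - cpair a γ := by
  obtain ⟨n, hn⟩ := R.exists_int_cpair_eq (B.subset ha) hγ
  have haa := (R.inner_self_pos (B.subset ha)).ne'
  have hγγ := (R.inner_self_pos hγ).ne'
  rw [B.htv_eq_sum_div, B.htv_eq_sum_div, (sref a).inner_map_map,
    Finset.sum_congr rfl fun b hb => by rw [B.coeff_sref_simple hγ ha hn hb]]
  simp only [Int.cast_sub, sub_mul, Int.cast_ite, Int.cast_zero, ite_mul, zero_mul,
    Finset.sum_sub_distrib, Finset.sum_ite_eq', ha, if_true, sub_div]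
  rw [← hn, cpair, cpair, real_inner_comm γ a]
  field_simp

theorem ht_pos {β : V} (hβ : B.IsPos β) : 0 < B.ht β := by
  refine (Finset.sum_nonneg fun b hb => hβ.2 b hb).lt_of_ne fun h => R.ne_zero_of_mem hβ.1 ?_
  have hz := (Finset.sum_eq_zero_iff_of_nonneg fun b hb => hβ.2 b hb).mp h.symm
  rw [B.coeff_spec β hβ.1]
  exact Finset.sum_eq_zero fun b hb => by simp [hz b hb]

theorem exists_simple_inner_pos {β : V} (hβ : B.IsPos β) :
    ∃ a ∈ B.Δ, 0 < ⟪β, a⟫ := by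
  by_contra! hle
  have hsum : ⟪β, β⟫ = ∑ b ∈ B.Δ, (B.coeff β b : ℝ) * ⟪β, b⟫ := by
    nth_rewrite 2 [B.coeff_spec β hβ.1]
    simp [inner_sum, real_inner_smul_right]
  have : ⟪β, β⟫ ≤ 0 := hsum ▸ Finset.sum_nonpos fun b hb =>
    mul_nonpos_of_nonneg_of_nonpos (by exact_mod_cast hβ.2 b hb) (hle b hb)
  linarith [R.inner_self_pos hβ.1]

theorem ht_sref_simple_lt {γ a : V} (hγ : γ ∈ R.Φ) (ha : a ∈ B.Δ) (hip : 0 < ⟪γ, a⟫) :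
    B.ht (sref a γ) < B.ht γ := by
  obtain ⟨n, hn⟩ := R.exists_int_cpair_eq (B.subset ha) hγ
  have hn1 : 0 < n := by
    have : (0 : ℝ) < n := hn ▸ div_pos (by linarith) (R.inner_self_pos (B.subset ha))
    exact_mod_cast this
  rw [Base.ht, Base.ht, Finset.sum_congr rfl fun b hb => B.coeff_sref_simple hγ ha hn hb,
    Finset.sum_sub_distrib, Finset.sum_ite_eq' B.Δ a fun _ => n, if_pos ha]
  omega

/-- Induction on the height of a positive root: every non-simple positive root `β` has a
simple root `a` with `(β | a) > 0`, and then `s_a β` is a positive root of smaller height. -/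
theorem isPos_induction {P : V → Prop} (simple : ∀ a ∈ B.Δ, P a)
    (step : ∀ β a, B.IsPos β → β ∉ B.Δ → a ∈ B.Δ → 0 < ⟪β, a⟫ → B.IsPos (sref a β) →
      P (sref a β) → P β)
    {β : V} (hβ : B.IsPos β) : P β := by
  induction hk : (B.ht β).toNat using Nat.strong_induction_on generalizing β with
  | _ k ih =>
    by_cases hβΔ : β ∈ B.Δ
    · exact simple β hβΔ
    obtain ⟨a, ha, hip⟩ := B.exists_simple_inner_pos hβ
    have hpos := B.isPos_sref_simple ha hβ fun h => hβΔ (h ▸ ha)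
    have hlt := B.ht_sref_simple_lt hβ.1 ha hip
    have := B.ht_pos hpos
    exact step β a hβ hβΔ ha hip hpos (ih _ (by omega) hpos rfl)

end Base

section Words

omit [FiniteDimensional ℝ V]

def srefProd (l : List V) : V ≃ₗᵢ[ℝ] V := (l.map sref).prod

@[simp]
theorem srefProd_nil : srefProd ([] : List V) = 1 := rfl

@[simp]
theorem srefProd_cons (a : V) (l : List V) : srefProd (a :: l) = sref a * srefProd l := by
  simp [srefProd]

@[simp]
theorem srefProd_append (l₁ l₂ : List V) :
    srefProd (l₁ ++ l₂) = srefProd l₁ * srefProd l₂ := by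
  simp [srefProd]

theorem srefProd_reverse (l : List V) : srefProd l.reverse = (srefProd l)⁻¹ := by
  induction l with
  | nil => simp
  | cons a l ih => simp [ih, sref_inv]

end Words

theorem NRootSystem.srefProd_mem_weyl (R : NRootSystem V) {l : List V}
    (hl : ∀ a ∈ l, a ∈ R.Φ) : srefProd l ∈ R.Weyl := by
  induction l with
  | nil => exact R.Weyl.one_mem
  | cons a l ih =>
    rw [srefProd_cons]
    exact R.Weyl.mul_mem (R.sref_mem_weyl (hl a (by simp))) (ih fun b hb => hl b (by simp [hb]))

namespace Base

variable {R : NRootSystem V} (B : Base R)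

theorem len_eq_sInf_list (w : V ≃ₗᵢ[ℝ] V) :
    B.len w = sInf {n | ∃ l : List V, (∀ a ∈ l, a ∈ B.Δ) ∧ l.length = n ∧ w = srefProd l} := by
  rw [Base.len]
  congr 1
  ext n
  constructor
  · rintro ⟨g, hg, rfl⟩
    refine ⟨List.ofFn g, fun a ha => ?_, List.length_ofFn, by simp [srefProd, List.map_ofFn]; rfl⟩
    obtain ⟨i, rfl⟩ := List.mem_ofFn.mp ha
    exact hg i
  · rintro ⟨l, hl, rfl, rfl⟩
    refine ⟨l.get, fun i => hl _ (List.get_mem l i), ?_⟩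
    rw [srefProd, show (fun i => sref (l.get i)) = sref ∘ l.get from rfl, ← List.map_ofFn,
      List.ofFn_get]

theorem len_le_length {l : List V} (hl : ∀ a ∈ l, a ∈ B.Δ) : B.len (srefProd l) ≤ l.length := by
  rw [B.len_eq_sInf_list]
  exact Nat.sInf_le ⟨l, hl, rfl, rfl⟩

theorem exists_word_sref_of_isPos {β : V} (hβ : B.IsPos β) :
    ∃ l : List V, (∀ a ∈ l, a ∈ B.Δ) ∧ sref β = srefProd l := by
  refine B.isPos_induction (P := fun β => ∃ l : List V, (∀ a ∈ l, a ∈ B.Δ) ∧ sref β = srefProd l)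
    (fun a ha => ⟨[a], by simpa using ha, by simp⟩) (fun β a _ _ ha _ _ ih => ?_) hβ
  obtain ⟨l, hl, hsref⟩ := ih
  refine ⟨a :: (l ++ [a]), ?_, ?_⟩
  · simp only [List.mem_cons, List.mem_append, List.not_mem_nil, or_false]
    rintro b (rfl | hb | rfl)
    exacts [ha, hl b hb, ha]
  · rw [sref_eq_sref_mul_sref_sref_mul a β, hsref]
    simp [mul_assoc]

theorem exists_word_of_mem_weyl {w : V ≃ₗᵢ[ℝ] V} (hw : w ∈ R.Weyl) :
    ∃ l : List V, (∀ a ∈ l, a ∈ B.Δ) ∧ w = srefProd l := by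
  induction hw using Subgroup.closure_induction with
  | mem _ hs =>
    obtain ⟨α, hα, rfl⟩ := hs
    rcases B.isPos_or_isNeg hα with hpos | hneg
    · exact B.exists_word_sref_of_isPos hpos
    · simpa [sref_neg] using B.exists_word_sref_of_isPos (B.isPos_neg hneg)
  | one => exact ⟨[], by simp, rfl⟩
  | mul x y _ _ hx hy =>
    obtain ⟨l₁, hl₁, rfl⟩ := hx
    obtain ⟨l₂, hl₂, rfl⟩ := hy
    exact ⟨l₁ ++ l₂, by simpa using fun a => Or.rec (hl₁ a) (hl₂ a), (srefProd_append _ _).symm⟩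
  | inv x _ hx =>
    obtain ⟨l, hl, rfl⟩ := hx
    exact ⟨l.reverse, by simpa using hl, (srefProd_reverse l).symm⟩

theorem exists_reduced_word {w : V ≃ₗᵢ[ℝ] V} (hw : w ∈ R.Weyl) :
    ∃ l : List V, (∀ a ∈ l, a ∈ B.Δ) ∧ w = srefProd l ∧ l.length = B.len w := by
  obtain ⟨l, hl, hwl⟩ := B.exists_word_of_mem_weyl hw
  have hne : {n | ∃ l : List V, (∀ a ∈ l, a ∈ B.Δ) ∧ l.length = n ∧ w = srefProd l}.Nonempty :=
    ⟨l.length, l, hl, rfl, hwl⟩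
  have hmem := Nat.sInf_mem hne
  rw [← B.len_eq_sInf_list w] at hmem
  obtain ⟨l', hl', hlen, hw'⟩ := hmem
  exact ⟨l', hl', hw', hlen⟩

theorem eq_one_of_len_eq_zero {w : V ≃ₗᵢ[ℝ] V} (hw : w ∈ R.Weyl) (h : B.len w = 0) : w = 1 := by
  obtain ⟨l, -, rfl, hlen⟩ := B.exists_reduced_word hw
  rw [h, List.length_eq_zero_iff] at hlen
  simp [hlen]

theorem len_mul_le {w₁ w₂ : V ≃ₗᵢ[ℝ] V} (h₁ : w₁ ∈ R.Weyl) (h₂ : w₂ ∈ R.Weyl) :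
    B.len (w₁ * w₂) ≤ B.len w₁ + B.len w₂ := by
  obtain ⟨l₁, hl₁, rfl, hlen₁⟩ := B.exists_reduced_word h₁
  obtain ⟨l₂, hl₂, rfl, hlen₂⟩ := B.exists_reduced_word h₂
  have := B.len_le_length (l := l₁ ++ l₂) (by simpa using fun a => Or.rec (hl₁ a) (hl₂ a))
  simpa [← hlen₁, ← hlen₂] using this

theorem len_sref_simple {a : V} (ha : a ∈ B.Δ) : B.len (sref a) = 1 := by
  have hle : B.len (sref a) ≤ 1 := by simpa using B.len_le_length (l := [a]) (by simpa using ha)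
  have hne : B.len (sref a) ≠ 0 := fun h => sref_ne_one (R.ne_zero_of_mem (B.subset ha))
    (B.eq_one_of_len_eq_zero (R.sref_mem_weyl (B.subset ha)) h)
  omega

theorem exists_flip {l : List V} (hl : ∀ a ∈ l, a ∈ B.Δ) {β : V} (hβ : B.IsPos β)
    (hneg : B.IsNeg ((srefProd l)⁻¹ β)) :
    ∃ l₁ c l₂, l = l₁ ++ c :: l₂ ∧ (srefProd l₁)⁻¹ β = c := by
  induction l generalizing β with
  | nil => exact absurd hβ (B.not_isPos_of_isNeg (by simpa using hneg))
  | cons a l ih =>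
    by_cases hβa : β = a
    · exact ⟨[], a, l, rfl, by simpa using hβa⟩
    have ha : a ∈ B.Δ := hl a (by simp)
    rw [srefProd_cons, mul_inv_rev, sref_inv] at hneg
    obtain ⟨l₁, c, l₂, rfl, hc⟩ := ih (fun b hb => hl b (by simp [hb]))
      (B.isPos_sref_simple ha hβ hβa) hneg
    exact ⟨a :: l₁, c, l₂, rfl, by simpa [sref_inv] using hc⟩

theorem len_sref_mul_lt {w : V ≃ₗᵢ[ℝ] V} (hw : w ∈ R.Weyl) {a : V} (ha : a ∈ B.Δ)
    (hneg : B.IsNeg (w⁻¹ a)) : B.len (sref a * w) < B.len w := by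
  obtain ⟨l, hl, rfl, hlen⟩ := B.exists_reduced_word hw
  obtain ⟨l₁, c, l₂, rfl, hc⟩ := B.exists_flip hl (B.isPos_of_mem_base ha) hneg
  have hca : srefProd l₁ c = a := by rw [← hc]; exact (srefProd l₁).apply_symm_apply a
  have hprod : sref a * srefProd (l₁ ++ c :: l₂) = srefProd (l₁ ++ l₂) := by
    rw [← hca, sref_map]
    simp only [srefProd_append, srefProd_cons]
    calc _ = srefProd l₁ * (sref c * sref c) * srefProd l₂ := by group
      _ = _ := by rw [sref_mul_self, mul_one]
  have := B.len_le_length (l := l₁ ++ l₂) fun b hb => hl b (by simp at hb ⊢; tauto)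
  rw [hprod, ← hlen]
  simp at this ⊢
  omega

end Base

namespace Base

variable {R : NRootSystem V} (B : Base R) (h : V)

theorem level_of_isPos {α : V} (hα : B.IsPos α) : B.level h α = B.htv h - B.htv α :=
  if_pos hα

theorem level_of_isNeg {α : V} (hα : B.IsNeg α) : B.level h α = B.htv h - B.htv α - 1 :=
  if_neg (B.not_isPos_of_isNeg hα)

theorem level_neg_of_isPos {α : V} (hα : B.IsPos α) :
    B.level h (-α) = B.level h α + (2 * B.htv α - 1) := by
  rw [B.level_of_isNeg h (B.isNeg_neg hα), B.level_of_isPos h hα, B.htv_neg hα.1]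
  ring

/-- Off `±a`, a simple reflection keeps the sign of a root, so only `ht∨` moves. -/
theorem level_sref_simple {a δ : V} (ha : a ∈ B.Δ) (hδ : δ ∈ R.Φ) (h₁ : δ ≠ a) (h₂ : δ ≠ -a) :
    B.level h (sref a δ) = B.level h δ + cpair a δ := by
  rcases B.isPos_or_isNeg hδ with hpos | hneg
  · rw [B.level_of_isPos h (B.isPos_sref_simple ha hpos h₁), B.level_of_isPos h hpos,
      B.htv_sref_simple hδ ha]
    ring
  · rw [B.level_of_isNeg h (B.isNeg_sref_simple ha hneg h₂), B.level_of_isNeg h hneg,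
      B.htv_sref_simple hδ ha]
    ring

theorem abs_level_sref_simple_sub_le_one {a δ : V} (ha : a ∈ B.Δ) (hδ : R.IsLong δ) :
    |B.level h (sref a δ) - B.level h δ| ≤ 1 := by
  have hapos := B.isPos_of_mem_base ha
  by_cases h₁ : δ = a
  · subst h₁
    norm_num [sref_apply_self, B.level_neg_of_isPos h hapos, B.htv_simple ha]
  by_cases h₂ : δ = -a
  · subst h₂
    norm_num [sref_apply_self, B.level_neg_of_isPos h hapos, B.htv_simple ha]
  rw [B.level_sref_simple h ha hδ.1 h₁ h₂, add_sub_cancel_left]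
  exact R.abs_cpair_le_one hδ (B.subset ha) (Ne.symm h₁) fun h => h₂ (by rw [h, neg_neg])

theorem level_sref_simple_of_inner_neg {a δ : V} (ha : a ∈ B.Δ) (hδ : R.IsLong δ)
    (hip : ⟪a, δ⟫ < 0) : B.level h (sref a δ) = B.level h δ - 1 := by
  by_cases h₂ : δ = -a
  · subst h₂
    rw [map_neg, sref_apply_self, neg_neg, B.level_neg_of_isPos h (B.isPos_of_mem_base ha),
      B.htv_simple ha]
    ring
  have h₁ : δ ≠ a := by
    rintro rfl
    linarith [R.inner_self_pos hδ.1]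
  rw [B.level_sref_simple h ha hδ.1 h₁ h₂,
    R.cpair_eq_neg_one_of_inner_neg hδ (B.subset ha) (fun h => h₂ (by rw [h, neg_neg])) hip]
  ring

theorem abs_level_apply_sub_le_len {w : V ≃ₗᵢ[ℝ] V} (hw : w ∈ R.Weyl) {δ : V}
    (hδ : R.IsLong δ) : |B.level h (w δ) - B.level h δ| ≤ B.len w := by
  obtain ⟨l, hl, rfl, hlen⟩ := B.exists_reduced_word hw
  rw [← hlen]
  clear hw hlen
  induction l with
  | nil => simp
  | cons a l ih =>
    have hl' : ∀ b ∈ l, b ∈ B.Δ := fun b hb => hl b (by simp [hb])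
    have hlong := R.isLong_apply_of_mem_weyl
      (R.srefProd_mem_weyl fun b hb => B.subset (hl' b hb)) hδ
    have hstep := B.abs_level_sref_simple_sub_le_one h (hl a (by simp)) hlong
    calc |B.level h (srefProd (a :: l) δ) - B.level h δ|
        ≤ |B.level h (sref a (srefProd l δ)) - B.level h (srefProd l δ)|
          + |B.level h (srefProd l δ) - B.level h δ| := abs_sub_le _ _ _
      _ ≤ 1 + l.length := add_le_add hstep (ih hl')
      _ = (a :: l).length := by push_cast [List.length_cons]; ring

theorem level_le_of_hasPath {β α : V} (hp : B.HasPath h β α) : B.level h β ≤ B.level h α := by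
  obtain ⟨n, g, c, rfl, rfl, hstep⟩ := hp
  induction Fin.last n using Fin.induction with
  | zero => exact le_rfl
  | succ i ih => rw [(hstep i).2.2.2.2]; linarith

variable {B h}

theorem minTake_mul {α β γ : V} (hγ : R.IsLong γ) (hp₁ : B.HasPath h β α)
    (hp₂ : B.HasPath h γ β) {x₁ x₂ : V ≃ₗᵢ[ℝ] V} (hx₁ : B.MinTake h β α x₁)
    (hx₂ : B.MinTake h γ β x₂) :
    B.MinTake h γ α (x₁ * x₂) ∧ B.len (x₁ * x₂) = B.len x₁ + B.len x₂ := by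
  obtain ⟨hw₁, rfl, hl₁⟩ := hx₁
  obtain ⟨hw₂, rfl, hl₂⟩ := hx₂
  have hw := R.Weyl.mul_mem hw₁ hw₂
  have hm₁ := B.level_le_of_hasPath h hp₁
  have hm₂ := B.level_le_of_hasPath h hp₂
  rw [abs_of_nonneg (sub_nonneg.mpr hm₁)] at hl₁
  rw [abs_of_nonneg (sub_nonneg.mpr hm₂)] at hl₂
  have hup : (B.len (x₁ * x₂) : ℝ) ≤ B.len x₁ + B.len x₂ := by exact_mod_cast B.len_mul_le hw₁ hw₂
  have hlo := (le_abs_self _).trans (B.abs_level_apply_sub_le_len h hw hγ)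
  have heq : (B.len (x₁ * x₂) : ℝ) = B.len x₁ + B.len x₂ := by
    simp only [LinearIsometryEquiv.coe_mul, Function.comp_apply] at hlo
    linarith
  refine ⟨⟨hw, rfl, ?_⟩, by exact_mod_cast heq⟩
  rw [heq, abs_of_nonneg (by linarith)]
  linarith

theorem len_sref_le {α : V} (hα : R.IsLong α) (hpos : B.IsPos α) :
    (B.len (sref α) : ℝ) ≤ 2 * B.htv α - 1 := by
  refine B.isPos_induction (P := fun α => R.IsLong α → (B.len (sref α) : ℝ) ≤ 2 * B.htv α - 1)
    (fun a ha _ => ?_) (fun β a _ hβΔ ha hip _ ih hβ => ?_) hpos hα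
  · rw [B.len_sref_simple ha, B.htv_simple ha]
    norm_num
  have hsa := R.sref_mem_weyl (B.subset ha)
  have hsβ := R.sref_mem_weyl (R.apply_mem_of_mem_weyl hsa hβ.1)
  have hcpair : cpair a β = 1 := R.cpair_eq_one_of_inner_pos hβ (B.subset ha)
    (fun h => hβΔ (h ▸ ha)) (by rwa [real_inner_comm])
  have hlen := (B.len_mul_le (R.Weyl.mul_mem hsa hsβ) hsa).trans
    (add_le_add_left (B.len_mul_le hsa hsβ) _)
  have hih := ih (R.isLong_apply_of_mem_weyl hsa hβ)
  rw [B.htv_sref_simple hβ.1 ha, hcpair] at hih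
  rw [sref_eq_sref_mul_sref_sref_mul a β]
  calc (B.len (sref a * sref (sref a β) * sref a) : ℝ)
      ≤ B.len (sref a) + B.len (sref (sref a β)) + B.len (sref a) := by exact_mod_cast hlen
    _ ≤ 2 * B.htv β - 1 := by rw [B.len_sref_simple ha]; push_cast; linarith

theorem minTake_sref {α : V} (hα : R.IsLong α) (hpos : B.IsPos α) :
    B.MinTake h α (-α) (sref α) := by
  have hle := B.len_sref_le hα hpos
  refine ⟨R.sref_mem_weyl hα.1, sref_apply_self α, ?_⟩
  have hlo := B.abs_level_apply_sub_le_len h (R.sref_mem_weyl hα.1) hα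
  rw [sref_apply_self] at hlo
  rw [B.level_neg_of_isPos h hpos, add_sub_cancel_left] at hlo ⊢
  rw [abs_of_nonneg (by linarith [(B.len (sref α)).cast_nonneg (α := ℝ)])] at hlo ⊢
  linarith

end Base

namespace Base

variable {R : NRootSystem V} (B : Base R)

theorem len_sref_mul_add_one_of_isNeg {w : V ≃ₗᵢ[ℝ] V} (hw : w ∈ R.Weyl) {a : V}
    (ha : a ∈ B.Δ) (hneg : B.IsNeg (w⁻¹ a)) : B.len (sref a * w) + 1 = B.len w := by
  have hsa := R.sref_mem_weyl (B.subset ha)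
  have hle := B.len_mul_le hsa (R.Weyl.mul_mem hsa hw)
  rw [← mul_assoc, sref_mul_self, one_mul, B.len_sref_simple ha] at hle
  have := B.len_sref_mul_lt hw ha hneg
  omega

theorem isNeg_inv_apply_of_len_sref_mul_lt {w : V ≃ₗᵢ[ℝ] V} (hw : w ∈ R.Weyl) {a : V}
    (ha : a ∈ B.Δ) (hlt : B.len (sref a * w) < B.len w) : B.IsNeg (w⁻¹ a) := by
  refine (B.isPos_or_isNeg (R.apply_mem_of_mem_weyl (R.Weyl.inv_mem hw) (B.subset ha))).resolve_left
    fun hpos => ?_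
  have hneg : B.IsNeg ((sref a * w)⁻¹ a) := by
    rw [mul_inv_rev, sref_inv, LinearIsometryEquiv.coe_mul, Function.comp_apply, sref_apply_self,
      map_neg]
    exact B.isNeg_neg hpos
  have := B.len_sref_mul_lt (R.Weyl.mul_mem (R.sref_mem_weyl (B.subset ha)) hw) ha hneg
  rw [← mul_assoc, sref_mul_self, one_mul] at this
  omega

theorem exists_len_sref_mul_add_one {w : V ≃ₗᵢ[ℝ] V} (hw : w ∈ R.Weyl) (hlen : B.len w ≠ 0) :
    ∃ a ∈ B.Δ, B.len (sref a * w) + 1 = B.len w := by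
  obtain ⟨_ | ⟨a, l⟩, hl, rfl, hlength⟩ := B.exists_reduced_word hw
  · exact absurd hlength.symm hlen
  have ha : a ∈ B.Δ := hl a (by simp)
  refine ⟨a, ha, B.len_sref_mul_add_one_of_isNeg hw ha
    (B.isNeg_inv_apply_of_len_sref_mul_lt hw ha ?_)⟩
  have := B.len_le_length (l := l) fun b hb => hl b (by simp [hb])
  rw [srefProd_cons, ← mul_assoc, sref_mul_self, one_mul, ← srefProd_cons, ← hlength]
  simp only [List.length_cons]
  omega

theorem sref_mul_mem_XI {I : Finset V} {w : V ≃ₗᵢ[ℝ] V} (hw : w ∈ B.XI I) {a : V}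
    (ha : a ∈ B.Δ) (hneg : B.IsNeg (w⁻¹ a)) : sref a * w ∈ B.XI I := by
  refine ⟨R.Weyl.mul_mem (R.sref_mem_weyl (B.subset ha)) hw.1, fun γ hγ hspan hpos => ?_⟩
  refine B.isPos_sref_simple ha (hw.2 γ hγ hspan hpos) fun hwγ => ?_
  have : w⁻¹ a = γ := by rw [← hwγ]; exact w.symm_apply_apply γ
  exact B.not_isPos_of_isNeg (this ▸ hneg) hpos

variable {h : V}

theorem isPos_of_isHighest (hh : B.IsHighest h) : B.IsPos h :=
  ⟨hh.1, fun b hb => by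
    have := hh.2 b (B.subset hb) b hb
    rw [B.coeff_simple hb hb, if_pos rfl] at this
    omega⟩

theorem inner_simple_nonneg_of_isHighest (hh : B.IsHighest h) {b : V} (hb : b ∈ B.Δ) :
    0 ≤ ⟪h, b⟫ := by
  by_contra! hneg
  obtain ⟨n, hn⟩ := R.exists_int_cpair_eq (B.subset hb) hh.1
  have : n < 0 := by
    have : cpair h b < 0 := div_neg_of_neg_of_pos (by linarith) (R.inner_self_pos (B.subset hb))
    exact_mod_cast hn ▸ this
  have hmax := hh.2 _ (R.reflect_mem b (B.subset hb) h hh.1) b hb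
  rw [B.coeff_sref_simple hh.1 hb hn hb, if_pos rfl] at hmax
  omega

theorem inner_highest_eq_sum {δ : V} (hδ : δ ∈ R.Φ) :
    ⟪δ, h⟫ = ∑ b ∈ B.Δ, (B.coeff δ b : ℝ) * ⟪h, b⟫ := by
  conv_lhs => rw [B.coeff_spec δ hδ, sum_inner]
  exact Finset.sum_congr rfl fun b _ => by rw [real_inner_smul_left, real_inner_comm]

theorem inner_highest_nonneg (hh : B.IsHighest h) {δ : V} (hδ : B.IsPos δ) : 0 ≤ ⟪δ, h⟫ := by
  rw [B.inner_highest_eq_sum hδ.1]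
  exact Finset.sum_nonneg fun b hb =>
    mul_nonneg (by exact_mod_cast hδ.2 b hb) (B.inner_simple_nonneg_of_isHighest hh hb)

theorem mem_span_Itil (hh : B.IsHighest h) {δ : V} (hδ : B.IsPos δ) (hip : ⟪δ, h⟫ = 0) :
    δ ∈ Submodule.span ℝ (B.Itil h : Set V) := by
  have hterm := (Finset.sum_eq_zero_iff_of_nonneg fun b hb => mul_nonneg
    (by exact_mod_cast hδ.2 b hb) (B.inner_simple_nonneg_of_isHighest hh hb)).mp
    ((B.inner_highest_eq_sum hδ.1).symm.trans hip)
  have hδI : δ = ∑ b ∈ B.Itil h, (B.coeff δ b : ℝ) • b := by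
    rw [Base.Itil, Finset.sum_filter_of_ne fun b hb hne => ?_]
    · exact B.coeff_spec δ hδ.1
    · exact (mul_eq_zero.mp (hterm b hb)).resolve_left fun hc => hne (by rw [hc, zero_smul])
  rw [hδI]
  exact Submodule.sum_mem _ fun b hb => Submodule.smul_mem _ _ (Submodule.subset_span hb)

theorem level_highest (hh : B.IsHighest h) : B.level h h = 0 := by
  rw [B.level_of_isPos h (B.isPos_of_isHighest hh), sub_self]

/-- If `w⁻¹ a < 0` then `-w⁻¹ a` is a positive root which `w ∈ X_Ĩ` sends to the negative
root `-a`, so it is not orthogonal to `α̃`. -/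
theorem inner_apply_highest_neg (hh : B.IsHighest h) {w : V ≃ₗᵢ[ℝ] V}
    (hw : w ∈ B.XI (B.Itil h)) {a : V} (ha : a ∈ B.Δ) (hneg : B.IsNeg (w⁻¹ a)) :
    ⟪a, w h⟫ < 0 := by
  have hwa : w (-w⁻¹ a) = -a := by rw [map_neg]; congr 1; exact w.apply_symm_apply a
  have hpos := B.isPos_neg hneg
  have hip : 0 < ⟪-w⁻¹ a, h⟫ := (B.inner_highest_nonneg hh hpos).lt_of_ne fun h0 => by
    have := hw.2 _ hpos.1 (B.mem_span_Itil hh hpos h0.symm) hpos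
    rw [hwa] at this
    exact B.not_isPos_of_isNeg (B.isNeg_neg (B.isPos_of_mem_base ha)) this
  rw [← w.inner_map_map, hwa, inner_neg_left] at hip
  linarith

theorem level_apply_highest_of_mem_XI (hh : B.IsHighest h) {w : V ≃ₗᵢ[ℝ] V}
    (hw : w ∈ B.XI (B.Itil h)) (hlong : R.IsLong (w h)) : B.level h (w h) = B.len w := by
  induction hn : B.len w generalizing w with
  | zero => simp [B.eq_one_of_len_eq_zero hw.1 hn, B.level_highest hh]
  | succ n ih =>
    obtain ⟨a, ha, hlen⟩ := B.exists_len_sref_mul_add_one hw.1 (by omega)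
    have hneg := B.isNeg_inv_apply_of_len_sref_mul_lt hw.1 ha (by omega)
    have hsa := R.sref_mem_weyl (B.subset ha)
    have := ih (B.sref_mul_mem_XI hw ha hneg) (R.isLong_apply_of_mem_weyl hsa hlong)
      (by omega)
    rw [LinearIsometryEquiv.coe_mul, Function.comp_apply,
      B.level_sref_simple_of_inner_neg h ha hlong (B.inner_apply_highest_neg hh hw ha hneg)]
      at this
    push_cast
    linarith

theorem minTake_of_mem_XI (hh : B.IsHighest h) {w : V ≃ₗᵢ[ℝ] V}
    (hw : w ∈ B.XI (B.Itil h)) (hlong : R.IsLong (w h)) : B.MinTake h h (w h) w := by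
  refine ⟨hw.1, rfl, ?_⟩
  rw [B.level_apply_highest_of_mem_XI hh hw hlong, B.level_highest hh, sub_zero,
    abs_of_nonneg (Nat.cast_nonneg _)]

end Base

/-- with `x_{αβ}` the unique minimal length element of `W` taking `β`
to `α` when it exists (formalized by the predicate `MinTake`):
(a) if `α ⪯ β ⪯ γ` are long roots such that `x_{αβ}` and `x_{βγ}` are defined, then
`x_{αγ}` is defined and equals `x_{αβ} x_{βγ}`, with
`l(x_{αγ}) = l(x_{αβ}) + l(x_{βγ})`;
(b) for every positive long root `α`, `x_{−α,α}` is defined and equals `s_α`;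
(c) for every long root `α`, `x_{α,α̃}` is defined and equals `x_α`, the unique
element of `X_Ĩ` with `x_α(α̃) = α`. -/
theorem minTake_comp_refl_and_xa (R : NRootSystem V) (B : Base R) {h : V}
    (hh : B.IsHighest h) :
    (∀ α β γ : V, R.IsLong α → R.IsLong β → R.IsLong γ →
      B.HasPath h β α → B.HasPath h γ β →
      ∀ x₁ x₂ : V ≃ₗᵢ[ℝ] V, B.MinTake h β α x₁ → B.MinTake h γ β x₂ →
        B.MinTake h γ α (x₁ * x₂) ∧ B.len (x₁ * x₂) = B.len x₁ + B.len x₂) ∧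
    (∀ α : V, R.IsLong α → B.IsPos α → B.MinTake h α (-α) (sref α)) ∧
    (∀ α : V, R.IsLong α → ∀ x ∈ B.XI (B.Itil h), x h = α → B.MinTake h h α x) := by
  refine ⟨fun α β γ _ _ hγ hp₁ hp₂ x₁ x₂ hx₁ hx₂ => Base.minTake_mul hγ hp₁ hp₂ hx₁ hx₂,
    fun α hα hpos => Base.minTake_sref hα hpos, ?_⟩
  rintro α hα x hx rfl
  exact B.minTake_of_mem_XI hh hx hα
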